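/- For ε > 0, the Hessian of F_b* at f ∈ ℝ^n equals (1/ε) diag(u ∘ Kv) − (1/ε) P diag(b)^{-1} Pᵀ, where u = e^{f/ε}, K = e^{−C/ε}, v = b/(Kᵀu), and P = diag(u) K diag(v); moreover this Hessian is positive semidefinite. -/

import Mathlib

open Finset Real

noncomputable def entropy {n m : ℕ} (P : Matrix (Fin n) (Fin m) ℝ) : ℝ :=
  -∑ i, ∑ j, P i j * (Real.log (P i j) - 1)

def couplings {n m : ℕ} (a : Fin n → ℝ) (b : Fin m → ℝ) :
    Set (Matrix (Fin n) (Fin m) ℝ) :=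
  {P | (∀ i j, 0 ≤ P i j) ∧ (∀ i, ∑ j, P i j = a i) ∧ (∀ j, ∑ i, P i j = b j)}

noncomputable def dotp {n m : ℕ} (P C : Matrix (Fin n) (Fin m) ℝ) : ℝ :=
  ∑ i, ∑ j, P i j * C i j

noncomputable def W {n m : ℕ} (C : Matrix (Fin n) (Fin m) ℝ) (ε : ℝ)
    (a : Fin n → ℝ) (b : Fin m → ℝ) : ℝ :=
  sInf {v | ∃ P ∈ couplings a b, v = dotp P C - ε * entropy P}

def simplex (n : ℕ) : Set (Fin n → ℝ) := {a | (∀ i, 0 ≤ a i) ∧ ∑ i, a i = 1}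

/-- The Fenchel conjugate of `a ↦ W^ε_C(a,b)` over the simplex. -/
noncomputable def Fstar {n m : ℕ} (C : Matrix (Fin n) (Fin m) ℝ) (ε : ℝ)
    (b : Fin m → ℝ) (f : EuclideanSpace ℝ (Fin n)) : ℝ :=
  sSup {v | ∃ a ∈ simplex n, v = ∑ i, f i * a i - W C ε a b}

/-- The Hessian matrix `(1/ε) diag(u ∘ Kv) − (1/ε) P diag(b)⁻¹ Pᵀ`,
where `u = e^{f/ε}`, `K = e^{−C/ε}`, `v = b/(Kᵀu)`, `P = diag(u) K diag(v)`. -/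
noncomputable def hessFstar {n m : ℕ} (C : Matrix (Fin n) (Fin m) ℝ) (ε : ℝ)
    (b : Fin m → ℝ) (f : EuclideanSpace ℝ (Fin n)) : Matrix (Fin n) (Fin n) ℝ :=
  Matrix.of fun i i' =>
    (if i = i' then
      (1/ε) * (Real.exp (f i / ε) *
        ∑ j, Real.exp (-C i j / ε) *
          (b j / ∑ p, Real.exp (-C p j / ε) * Real.exp (f p / ε)))
     else 0)
    - (1/ε) * ∑ j,
        (Real.exp (f i / ε) * Real.exp (-C i j / ε) *
          (b j / ∑ p, Real.exp (-C p j / ε) * Real.exp (f p / ε))) *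
        (Real.exp (f i' / ε) * Real.exp (-C i' j / ε) *
          (b j / ∑ p, Real.exp (-C p j / ε) * Real.exp (f p / ε))) / b j

/-!
For a plan `P` with column sums `b`, the objective `⟨f, P𝟙⟩ - ⟨P, C⟩ + ε H(P)` equals
`ε (H(b) + ⟨b, log Kᵀu⟩) - ε KL(P ‖ P*)` with `P* = diag(u) K diag(v)` the Gibbs plan, so
Gibbs' inequality gives the closed form `F_b*(f) = ε (H(b) + ⟨b, log Kᵀ e^{f/ε}⟩)`, attained at
`a = P*𝟙`. Column `j` contributes a weighted log-sum-exp whose gradient is the softmax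
`σⱼ = (Kᵢⱼ uᵢ / (Kᵀu)ⱼ)ᵢ` and whose Hessian is `ε⁻¹ (diag σⱼ - σⱼ σⱼᵀ)`. Since `P*ᵢⱼ = bⱼ σⱼᵢ`, the
Hessian of `F_b*` is `∑ⱼ (bⱼ / ε) (diag σⱼ - σⱼ σⱼᵀ)`, which is the claimed matrix; each summand is
positive semidefinite by Cauchy–Schwarz, `σⱼ` being a probability vector.
-/

lemma mul_log_sub_mul_log_le {x y : ℝ} (hx : 0 ≤ x) (hy : 0 < y) :
    x * log y - x * log x ≤ y - x := by
  rcases hx.eq_or_lt with rfl | hx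
  · simpa using hy.le
  · have h := mul_le_mul_of_nonneg_left (log_le_sub_one_of_pos (div_pos hy hx)) hx.le
    rw [log_div hy.ne' hx.ne', mul_sub_one, mul_div_cancel₀ _ hx.ne', mul_sub] at h
    exact h

open Matrix in
lemma posSemidef_diagonal_sub_vecMulVec {ι : Type*} [Fintype ι] [DecidableEq ι] {σ : ι → ℝ}
    (hσ : ∀ i, 0 ≤ σ i) (hsum : ∑ i, σ i ≤ 1) : (diagonal σ - vecMulVec σ σ).PosSemidef := by
  rw [posSemidef_iff_dotProduct_mulVec]
  refine ⟨?_, fun x => ?_⟩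
  · ext i j
    by_cases h : i = j <;> simp [vecMulVec_apply, h, eq_comm, mul_comm]
  · have hquad : star x ⬝ᵥ ((diagonal σ - vecMulVec σ σ) *ᵥ x)
        = ∑ i, σ i * x i ^ 2 - (∑ i, σ i * x i) ^ 2 := by
      simp only [dotProduct, Pi.star_apply, star_trivial, sub_mulVec, vecMulVec_mulVec, op_sum,
        MulOpposite.op_mul, Pi.sub_apply, mulVec_diagonal, Pi.smul_apply,
        MulOpposite.smul_eq_mul_unop, unop_sum, MulOpposite.unop_mul, MulOpposite.unop_op, mul_sum,
        sq, sum_mul]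
      rw [← sum_sub_distrib]
      refine sum_congr rfl fun i _ => ?_
      rw [mul_sub, mul_sum]
      congr 1
      · ring
      · exact sum_congr rfl fun k _ => by ring
    have hcs : (∑ i, σ i * x i) ^ 2 ≤ (∑ i, σ i) * ∑ i, σ i * x i ^ 2 :=
      sum_sq_le_sum_mul_sum_of_sq_le_mul _ (fun i _ => hσ i)
        (fun i _ => mul_nonneg (hσ i) (sq_nonneg _)) fun i _ => le_of_eq (by ring)
    have hmass : (∑ i, σ i) * ∑ i, σ i * x i ^ 2 ≤ ∑ i, σ i * x i ^ 2 :=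
      mul_le_of_le_one_left (sum_nonneg fun i _ => mul_nonneg (hσ i) (sq_nonneg _)) hsum
    rw [hquad]
    linarith

lemma iteratedFDeriv_two_apply_of_hasFDerivAt {𝕜 E F : Type*} [NontriviallyNormedField 𝕜]
    [NormedAddCommGroup E] [NormedSpace 𝕜 E] [NormedAddCommGroup F] [NormedSpace 𝕜 F]
    {f : E → F} {f' : E → E →L[𝕜] F} {f'' : E →L[𝕜] E →L[𝕜] F} {x : E}
    (hf : ∀ y, HasFDerivAt f (f' y) y) (hf' : HasFDerivAt f' f'' x) (v w : E) :
    iteratedFDeriv 𝕜 2 f x ![v, w] = f'' v w := by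
  rw [iteratedFDeriv_two_apply, funext fun y => (hf y).fderiv, hf'.fderiv]
  rfl

section Softmax

variable {ι : Type*} [Fintype ι] (w : ι → ℝ) (ε : ℝ)

noncomputable def partitionFn (y : EuclideanSpace ℝ ι) : ℝ :=
  ∑ p, w p * exp (y p / ε)

noncomputable def softmax (y : EuclideanSpace ℝ ι) (p : ι) : ℝ :=
  w p * exp (y p / ε) / partitionFn w ε y

variable {w ε}

lemma partitionFn_nonneg (hw : ∀ p, 0 ≤ w p) (y : EuclideanSpace ℝ ι) :
    0 ≤ partitionFn w ε y :=
  sum_nonneg fun p _ => mul_nonneg (hw p) (exp_pos _).le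

lemma partitionFn_pos [Nonempty ι] (hw : ∀ p, 0 < w p) (y : EuclideanSpace ℝ ι) :
    0 < partitionFn w ε y :=
  sum_pos (fun p _ => mul_pos (hw p) (exp_pos _)) univ_nonempty

lemma softmax_nonneg (hw : ∀ p, 0 ≤ w p) (y : EuclideanSpace ℝ ι) (p : ι) :
    0 ≤ softmax w ε y p :=
  div_nonneg (mul_nonneg (hw p) (exp_pos _).le) (partitionFn_nonneg hw y)

lemma softmax_pos [Nonempty ι] (hw : ∀ p, 0 < w p) (y : EuclideanSpace ℝ ι) (p : ι) :
    0 < softmax w ε y p :=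
  div_pos (mul_pos (hw p) (exp_pos _)) (partitionFn_pos hw y)

lemma sum_softmax_eq_div (y : EuclideanSpace ℝ ι) :
    ∑ p, softmax w ε y p = partitionFn w ε y / partitionFn w ε y := by
  simp only [softmax, ← sum_div, partitionFn]

lemma sum_softmax_le_one (y : EuclideanSpace ℝ ι) :
    ∑ p, softmax w ε y p ≤ 1 := by
  rw [sum_softmax_eq_div]; exact div_self_le_one _

lemma sum_softmax [Nonempty ι] (hw : ∀ p, 0 < w p) (y : EuclideanSpace ℝ ι) :
    ∑ p, softmax w ε y p = 1 := by
  rw [sum_softmax_eq_div, div_self (partitionFn_pos hw y).ne']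

lemma log_softmax [Nonempty ι] (hw : ∀ p, 0 < w p) (y : EuclideanSpace ℝ ι) (p : ι) :
    log (softmax w ε y p) = log (w p) + y p / ε - log (partitionFn w ε y) := by
  rw [softmax, log_div (mul_pos (hw p) (exp_pos _)).ne' (partitionFn_pos hw y).ne',
    log_mul (hw p).ne' (exp_pos _).ne', log_exp]

lemma hasFDerivAt_exp_apply_div (p : ι) (x : EuclideanSpace ℝ ι) :
    HasFDerivAt (fun y : EuclideanSpace ℝ ι => exp (y p / ε))
      ((exp (x p / ε) * ε⁻¹) • EuclideanSpace.proj (𝕜 := ℝ) p) x := by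
  have := (((EuclideanSpace.proj (𝕜 := ℝ) p).hasFDerivAt (x := x)).mul_const ε⁻¹).exp
  simpa [div_eq_mul_inv, smul_smul] using this

lemma hasFDerivAt_partitionFn (x : EuclideanSpace ℝ ι) :
    HasFDerivAt (partitionFn w ε)
      (∑ p, (w p * (exp (x p / ε) * ε⁻¹)) • EuclideanSpace.proj (𝕜 := ℝ) p) x := by
  unfold partitionFn
  simpa only [smul_smul] using
    HasFDerivAt.fun_sum fun p _ => (hasFDerivAt_exp_apply_div p x).const_mul (w p)

lemma hasFDerivAt_mul_log_partitionFn [Nonempty ι] (hw : ∀ p, 0 < w p) (hε : ε ≠ 0)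
    (x : EuclideanSpace ℝ ι) :
    HasFDerivAt (fun y => ε * log (partitionFn w ε y))
      (∑ p, softmax w ε x p • EuclideanSpace.proj (𝕜 := ℝ) p) x := by
  have hZ := (partitionFn_pos (ε := ε) hw x).ne'
  refine (((hasFDerivAt_partitionFn x).log hZ).const_mul ε).congr_fderiv ?_
  simp only [Finset.smul_sum, smul_smul]
  refine sum_congr rfl fun p _ => ?_
  rw [softmax]
  field_simp

/-- `softmax w ε y p = w p * exp ((y p - ε log Z(y)) / ε)` reduces this to the chain rule and
the gradient of `ε log Z`. -/
lemma hasFDerivAt_softmax [Nonempty ι] (hw : ∀ p, 0 < w p) (hε : ε ≠ 0)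
    (x : EuclideanSpace ℝ ι) (p : ι) :
    HasFDerivAt (fun y => softmax w ε y p)
      ((ε⁻¹ * softmax w ε x p) •
        (EuclideanSpace.proj (𝕜 := ℝ) p - ∑ q, softmax w ε x q • EuclideanSpace.proj (𝕜 := ℝ) q))
      x := by
  have hform : ∀ y, softmax w ε y p = w p * exp ((y p - ε * log (partitionFn w ε y)) * ε⁻¹) := by
    intro y
    rw [softmax, show (y p - ε * log (partitionFn w ε y)) * ε⁻¹ = y p / ε - log (partitionFn w ε y)
      by field_simp, exp_sub, exp_log (partitionFn_pos hw y), mul_div_assoc]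
  have hcoord :
      HasFDerivAt (fun y : EuclideanSpace ℝ ι => y p) (EuclideanSpace.proj (𝕜 := ℝ) p) x :=
    (EuclideanSpace.proj (𝕜 := ℝ) p).hasFDerivAt
  have hexp := ((hcoord.sub (hasFDerivAt_mul_log_partitionFn hw hε x)).mul_const ε⁻¹).exp.const_mul
    (w p)
  simp only [Pi.sub_apply] at hexp
  rw [funext hform]
  refine hexp.congr_fderiv ?_
  rw [hform x, smul_smul, smul_smul]
  ring_nf

end Softmax

section EntropicTransport

open Matrix

variable {n m : ℕ} (C : Matrix (Fin n) (Fin m) ℝ) (ε : ℝ) (b : Fin m → ℝ)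
  (f : EuclideanSpace ℝ (Fin n))

noncomputable def gibbsKernel : Matrix (Fin n) (Fin m) ℝ :=
  of fun i j => exp (-C i j / ε)

/-- `diag(u) K diag(v)` with `u = e^{f/ε}`, `v = b / Kᵀu`: column `j` is `b j` times a softmax. -/
noncomputable def gibbsPlan : Matrix (Fin n) (Fin m) ℝ :=
  of fun i j => b j * softmax ((gibbsKernel C ε)ᵀ j) ε f i

/-- `ε (H(b) + ⟨b, log Kᵀ e^{f/ε}⟩)`. -/
noncomputable def entropicDual : ℝ :=
  ∑ j, b j * (ε * (1 - log (b j)) + ε * log (partitionFn ((gibbsKernel C ε)ᵀ j) ε f))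

noncomputable def hessEntropicDual : Matrix (Fin n) (Fin n) ℝ :=
  ∑ j, (b j / ε) •
    (diagonal (softmax ((gibbsKernel C ε)ᵀ j) ε f)
      - vecMulVec (softmax ((gibbsKernel C ε)ᵀ j) ε f) (softmax ((gibbsKernel C ε)ᵀ j) ε f))

variable {C ε b f}

lemma gibbsKernel_col_pos (j : Fin m) (i : Fin n) : 0 < (gibbsKernel C ε)ᵀ j i := exp_pos _

lemma gibbsPlan_pos [Nonempty (Fin n)] (hb : ∀ j, 0 < b j) (i : Fin n) (j : Fin m) :
    0 < gibbsPlan C ε b f i j :=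
  mul_pos (hb j) (softmax_pos (gibbsKernel_col_pos j) f i)

lemma sum_gibbsPlan_col [Nonempty (Fin n)] (j : Fin m) : ∑ i, gibbsPlan C ε b f i j = b j := by
  simp only [gibbsPlan, of_apply, ← mul_sum, sum_softmax (gibbsKernel_col_pos j), mul_one]

lemma log_gibbsPlan [Nonempty (Fin n)] (hb : ∀ j, 0 < b j) (i : Fin n) (j : Fin m) :
    log (gibbsPlan C ε b f i j)
      = log (b j) + (f i - C i j) / ε - log (partitionFn ((gibbsKernel C ε)ᵀ j) ε f) := by
  rw [gibbsPlan, of_apply, log_mul (hb j).ne' (softmax_pos (gibbsKernel_col_pos j) f i).ne',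
    log_softmax (gibbsKernel_col_pos j)]
  simp only [transpose_apply, gibbsKernel, of_apply, log_exp]
  ring

lemma gibbsPlan_mem_couplings [Nonempty (Fin n)] (hb : ∀ j, 0 < b j) :
    gibbsPlan C ε b f ∈ couplings (fun i => ∑ j, gibbsPlan C ε b f i j) b :=
  ⟨fun i j => (gibbsPlan_pos hb i j).le, fun _ => rfl, sum_gibbsPlan_col⟩

lemma rowSums_gibbsPlan_mem_simplex [Nonempty (Fin n)] (hb : ∀ j, 0 < b j) (hb1 : ∑ j, b j = 1) :
    (fun i => ∑ j, gibbsPlan C ε b f i j) ∈ simplex n :=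
  ⟨fun i => sum_nonneg fun j _ => (gibbsPlan_pos hb i j).le, by
    dsimp only; exact sum_comm.trans (by simp only [sum_gibbsPlan_col, hb1])⟩

lemma vecMulVec_mem_couplings {a : Fin n → ℝ} (ha : a ∈ simplex n) (hb : ∀ j, 0 ≤ b j)
    (hb1 : ∑ j, b j = 1) : vecMulVec a b ∈ couplings a b :=
  ⟨fun i j => mul_nonneg (ha.1 i) (hb j),
    fun i => by simp [vecMulVec_apply, ← mul_sum, hb1],
    fun j => by simp [vecMulVec_apply, ← sum_mul, ha.2]⟩

lemma pairing_sub_cost_eq [Nonempty (Fin n)] (hε : ε ≠ 0) (hb : ∀ j, 0 < b j) {a : Fin n → ℝ}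
    {P : Matrix (Fin n) (Fin m) ℝ} (hP : P ∈ couplings a b) :
    ∑ i, f i * a i - (dotp P C - ε * entropy P)
      = ε * ∑ j, ∑ i, (P i j * log (gibbsPlan C ε b f i j) - P i j * log (P i j))
        + entropicDual C ε b f := by
  obtain ⟨-, hrow, hcol⟩ := hP
  set L : Fin m → ℝ := fun j => log (partitionFn ((gibbsKernel C ε)ᵀ j) ε f)
  have hdual : entropicDual C ε b f = ∑ j, ∑ i, P i j * (ε * (1 - log (b j)) + ε * L j) := by
    simp only [entropicDual, ← sum_mul, hcol, L]
  calc ∑ i, f i * a i - (dotp P C - ε * entropy P)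
      = ∑ i, ∑ j, (P i j * (f i - C i j) - ε * (P i j * (log (P i j) - 1))) := by
        simp only [← hrow, dotp, entropy, mul_sum, mul_neg, sub_neg_eq_add, ← sum_add_distrib,
          ← sum_sub_distrib]
        exact sum_congr rfl fun i _ => sum_congr rfl fun j _ => by ring
    _ = ∑ j, ∑ i, (P i j * (f i - C i j) - ε * (P i j * (log (P i j) - 1))) := sum_comm
    _ = ∑ j, ∑ i, (ε * (P i j * log (gibbsPlan C ε b f i j) - P i j * log (P i j))
          + P i j * (ε * (1 - log (b j)) + ε * L j)) := by
        refine sum_congr rfl fun j _ => sum_congr rfl fun i _ => ?_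
        rw [log_gibbsPlan hb]
        field_simp
        ring
    _ = _ := by
        rw [hdual, mul_sum, ← sum_add_distrib]
        simp only [mul_sum, sum_add_distrib]

lemma pairing_sub_cost_le [Nonempty (Fin n)] (hε : 0 < ε) (hb : ∀ j, 0 < b j) {a : Fin n → ℝ}
    {P : Matrix (Fin n) (Fin m) ℝ} (hP : P ∈ couplings a b) :
    ∑ i, f i * a i - (dotp P C - ε * entropy P) ≤ entropicDual C ε b f := by
  have hgibbs : ∑ j, ∑ i, (P i j * log (gibbsPlan C ε b f i j) - P i j * log (P i j)) ≤ 0 :=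
    calc _ ≤ ∑ j, ∑ i, (gibbsPlan C ε b f i j - P i j) :=
          sum_le_sum fun j _ => sum_le_sum fun i _ =>
            mul_log_sub_mul_log_le (hP.1 i j) (gibbsPlan_pos hb i j)
      _ = 0 := by simp only [sum_sub_distrib, sum_gibbsPlan_col, hP.2.2, sub_self, sum_const_zero]
  rw [pairing_sub_cost_eq hε.ne' hb hP]
  exact add_le_of_nonpos_left (mul_nonpos_of_nonneg_of_nonpos hε.le hgibbs)

lemma pairing_sub_cost_gibbsPlan [Nonempty (Fin n)] (hε : ε ≠ 0) (hb : ∀ j, 0 < b j) :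
    ∑ i, f i * (∑ j, gibbsPlan C ε b f i j)
        - (dotp (gibbsPlan C ε b f) C - ε * entropy (gibbsPlan C ε b f))
      = entropicDual C ε b f := by
  simp [pairing_sub_cost_eq hε hb (gibbsPlan_mem_couplings hb)]

lemma pairing_sub_entropicDual_le_W [Nonempty (Fin n)] (hε : 0 < ε) (hb : ∀ j, 0 < b j)
    (hb1 : ∑ j, b j = 1) {a : Fin n → ℝ} (ha : a ∈ simplex n) :
    ∑ i, f i * a i - entropicDual C ε b f ≤ W C ε a b := by
  refine le_csInf ⟨_, vecMulVec a b, vecMulVec_mem_couplings ha (fun j => (hb j).le) hb1, rfl⟩ ?_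
  rintro _ ⟨P, hP, rfl⟩
  linarith [pairing_sub_cost_le (f := f) (C := C) hε hb hP]

lemma W_rowSums_gibbsPlan [Nonempty (Fin n)] (hε : 0 < ε) (hb : ∀ j, 0 < b j) :
    W C ε (fun i => ∑ j, gibbsPlan C ε b f i j) b
      = ∑ i, f i * (∑ j, gibbsPlan C ε b f i j) - entropicDual C ε b f := by
  refine IsLeast.csInf_eq ⟨⟨_, gibbsPlan_mem_couplings hb, ?_⟩, ?_⟩
  · linarith [pairing_sub_cost_gibbsPlan (f := f) (C := C) hε.ne' hb]
  · rintro _ ⟨P, hP, rfl⟩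
    linarith [pairing_sub_cost_le (f := f) (C := C) hε hb hP]

lemma Fstar_eq_entropicDual [Nonempty (Fin n)] (hε : 0 < ε) (hb : ∀ j, 0 < b j)
    (hb1 : ∑ j, b j = 1) : Fstar C ε b f = entropicDual C ε b f := by
  refine IsGreatest.csSup_eq
    ⟨⟨_, rowSums_gibbsPlan_mem_simplex (C := C) (ε := ε) (f := f) hb hb1, ?_⟩, ?_⟩
  · rw [W_rowSums_gibbsPlan hε hb]
    ring
  · rintro _ ⟨a, ha, rfl⟩
    linarith [pairing_sub_entropicDual_le_W (f := f) (C := C) hε hb hb1 ha]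

lemma hasFDerivAt_Fstar [Nonempty (Fin n)] (hε : 0 < ε) (hb : ∀ j, 0 < b j) (hb1 : ∑ j, b j = 1)
    (x : EuclideanSpace ℝ (Fin n)) :
    HasFDerivAt (Fstar C ε b)
      (∑ p, (∑ j, gibbsPlan C ε b x p j) • EuclideanSpace.proj (𝕜 := ℝ) p) x := by
  rw [show Fstar C ε b = entropicDual C ε b from funext fun y => Fstar_eq_entropicDual hε hb hb1]
  unfold entropicDual
  refine (HasFDerivAt.fun_sum fun j _ => ((hasFDerivAt_const _ x).add
    (hasFDerivAt_mul_log_partitionFn (gibbsKernel_col_pos j) hε.ne' x)).const_mul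
      (b j)).congr_fderiv ?_
  simp only [zero_add, smul_sum, smul_smul, sum_smul, gibbsPlan, of_apply]
  exact sum_comm

lemma hasFDerivAt_gibbsPlan [Nonempty (Fin n)] (hε : ε ≠ 0) (x : EuclideanSpace ℝ (Fin n))
    (p : Fin n) (j : Fin m) :
    HasFDerivAt (fun y => gibbsPlan C ε b y p j)
      ((b j * (ε⁻¹ * softmax ((gibbsKernel C ε)ᵀ j) ε x p)) •
        (EuclideanSpace.proj (𝕜 := ℝ) p
          - ∑ q, softmax ((gibbsKernel C ε)ᵀ j) ε x q • EuclideanSpace.proj (𝕜 := ℝ) q)) x :=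
  ((hasFDerivAt_softmax (gibbsKernel_col_pos j) hε x p).const_mul (b j)).congr_fderiv
    (smul_smul _ _ _)

lemma iteratedFDeriv_two_Fstar_single (hε : 0 < ε) (hb : ∀ j, 0 < b j) (hb1 : ∑ j, b j = 1)
    (i i' : Fin n) :
    iteratedFDeriv ℝ 2 (Fstar C ε b) f ![EuclideanSpace.single i 1, EuclideanSpace.single i' 1]
      = hessEntropicDual C ε b f i i' := by
  have : Nonempty (Fin n) := ⟨i⟩
  have hgrad := HasFDerivAt.fun_sum (u := univ) fun p _ =>
    (HasFDerivAt.fun_sum (u := univ) fun j _ =>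
      hasFDerivAt_gibbsPlan (b := b) (C := C) hε.ne' f p j).smul_const
        (EuclideanSpace.proj (𝕜 := ℝ) p)
  rw [iteratedFDeriv_two_apply_of_hasFDerivAt (hasFDerivAt_Fstar hε hb hb1) hgrad]
  simp only [hessEntropicDual, _root_.sum_apply, Matrix.sum_apply,
    ContinuousLinearMap.smulRight_apply, FunLike.coe_smul, FunLike.coe_sub, Pi.smul_apply,
    Pi.sub_apply, Matrix.smul_apply, Matrix.sub_apply, diagonal_apply, vecMulVec_apply,
    PiLp.proj_apply, PiLp.single_apply, smul_eq_mul, mul_ite, mul_one, mul_zero, sum_ite_eq',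
    mem_univ, ↓reduceIte]
  refine sum_congr rfl fun j _ => ?_
  by_cases h : i = i'
  · subst h; simp only [↓reduceIte]; ring
  · simp only [h, Ne.symm h, ↓reduceIte]; ring

lemma hessFstar_eq_hessEntropicDual (hb : ∀ j, 0 < b j) :
    hessFstar C ε b f = hessEntropicDual C ε b f := by
  ext i i'
  simp only [hessFstar, hessEntropicDual, of_apply, Matrix.sum_apply, Matrix.smul_apply,
    Matrix.sub_apply, diagonal_apply, vecMulVec_apply, smul_eq_mul, softmax, partitionFn,
    gibbsKernel, transpose_apply]
  split_ifs with h
  · subst h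
    rw [mul_sum, mul_sum, mul_sum, ← sum_sub_distrib]
    refine sum_congr rfl fun j _ => ?_
    have := (hb j).ne'
    field_simp
  · rw [zero_sub, mul_sum, ← sum_neg_distrib]
    refine sum_congr rfl fun j _ => ?_
    have := (hb j).ne'
    field_simp
    ring

lemma hessEntropicDual_posSemidef (hε : 0 < ε) (hb : ∀ j, 0 ≤ b j) :
    (hessEntropicDual C ε b f).PosSemidef :=
  posSemidef_sum _ fun j _ =>
    (posSemidef_diagonal_sub_vecMulVec (softmax_nonneg (fun p => (gibbsKernel_col_pos j p).le) f)
      (sum_softmax_le_one f)).smul (div_nonneg (hb j) hε.le)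

end EntropicTransport

theorem stmt19 {n m : ℕ} (b : Fin m → ℝ)
    (hb : (∀ j, 0 < b j) ∧ ∑ j, b j = 1)
    (C : Matrix (Fin n) (Fin m) ℝ) (ε : ℝ) (hε : 0 < ε)
    (f : EuclideanSpace ℝ (Fin n)) :
    (∀ i i', iteratedFDeriv ℝ 2 (Fstar C ε b) f
        ![EuclideanSpace.single i 1, EuclideanSpace.single i' 1] = hessFstar C ε b f i i')
    ∧ (hessFstar C ε b f).PosSemidef := by
  rw [hessFstar_eq_hessEntropicDual hb.1]
  exact ⟨iteratedFDeriv_two_Fstar_single hε hb.1 hb.2,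
    hessEntropicDual_posSemidef hε fun j => (hb.1 j).le⟩
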